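/- For p = 0, any ν ∈ ℝ, τ > 0, and t > 0, one has H_{ν,0,τ}(t) = sup_{n≥1} n^ν e^{-2^{τn} t} ≤ C ℓ(t)^{ν₊}, where ν₊ = max(ν,0) and ℓ(t) = log(max(1/t,2)). -/

import Mathlib

/-!
Put `c = τ log 2` and `y = 2^{τn} t = e^{cn} t`. Since `t ≥ e^{-ℓ(t)}`, we get
`y ≥ e^{cn - ℓ(t)} ≥ cn - ℓ(t)`, so `cn ≤ ℓ(t) + y`; as `ℓ(t) ≥ log 2` this gives
`n ≤ ℓ(t) (log 2 + y) / (c log 2)`. The factor `(log 2 + y)^ν` is then absorbed by `e^{-y}`,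
because `z^ν e^{-z} ≤ ν^ν e^{-ν}` for all `z > 0`.
-/

/-- Tamed logarithm `ℓ(t) = log(1/t ∨ 2)`. -/
noncomputable def tamedLog (t : ℝ) : ℝ := Real.log (max (1/t) 2)

open Real

theorem rpow_mul_exp_neg_le {x ν : ℝ} (hx : 0 < x) (hν : 0 < ν) :
    x ^ ν * exp (-x) ≤ ν ^ ν * exp (-ν) := by
  have hlog : ν * log (x / ν) ≤ x - ν := by
    have := mul_le_mul_of_nonneg_left (log_le_sub_one_of_pos (div_pos hx hν)) hν.le
    rwa [mul_sub, mul_div_cancel₀ _ hν.ne', mul_one] at this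
  rw [rpow_def_of_pos hx, rpow_def_of_pos hν, ← exp_add, ← exp_add, exp_le_exp]
  rw [log_div hx.ne' hν.ne'] at hlog
  linarith

theorem log_two_le_tamedLog (t : ℝ) : log 2 ≤ tamedLog t :=
  log_le_log two_pos (le_max_right _ _)

theorem tamedLog_pos (t : ℝ) : 0 < tamedLog t :=
  (log_pos one_lt_two).trans_le (log_two_le_tamedLog t)

theorem exp_neg_tamedLog_le {t : ℝ} (ht : 0 < t) : exp (-tamedLog t) ≤ t := by
  rw [exp_neg, inv_le_comm₀ (exp_pos _) ht, tamedLog,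
    exp_log (two_pos.trans_le (le_max_right _ _)), ← one_div]
  exact le_max_left _ _

theorem le_tamedLog_add_exp_mul (s : ℝ) {t : ℝ} (ht : 0 < t) : s ≤ tamedLog t + exp s * t := by
  have : exp (s - tamedLog t) ≤ exp s * t := by
    rw [sub_eq_add_neg, exp_add]
    exact mul_le_mul_of_nonneg_left (exp_neg_tamedLog_le ht) (exp_pos s).le
  linarith [add_one_le_exp (s - tamedLog t)]

theorem rpow_mul_exp_neg_exp_mul_le {ν c t x : ℝ} (hν : 0 < ν) (hc : 0 < c) (ht : 0 < t)
    (hx : 0 ≤ x) :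
    x ^ ν * exp (-(exp (c * x) * t)) ≤
      2 * (ν / (c * log 2)) ^ ν * exp (-ν) * tamedLog t ^ ν := by
  set L := tamedLog t
  set y := exp (c * x) * t
  have hL : 0 < L := tamedLog_pos t
  have hy : 0 ≤ y := by positivity
  have hx_le : x ≤ L / (c * log 2) * (log 2 + y) := by
    have h₁ : c * x * log 2 ≤ (L + y) * log 2 :=
      mul_le_mul_of_nonneg_right (le_tamedLog_add_exp_mul (c * x) ht) (log_pos one_lt_two).le
    have h₂ : log 2 * y ≤ L * y := mul_le_mul_of_nonneg_right (log_two_le_tamedLog t) hy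
    rw [div_mul_eq_mul_div, le_div_iff₀ (by positivity)]
    linarith
  calc x ^ ν * exp (-y)
      ≤ (L / (c * log 2) * (log 2 + y)) ^ ν * exp (-y) := by gcongr
    _ = (L / (c * log 2)) ^ ν * ((log 2 + y) ^ ν * exp (-(log 2 + y))) * exp (log 2) := by
        rw [mul_rpow (by positivity) (by positivity), mul_assoc _ _ (exp (log 2)),
          mul_assoc _ (exp _), ← exp_add, neg_add_rev, neg_add_cancel_right, mul_assoc]
    _ ≤ (L / (c * log 2)) ^ ν * (ν ^ ν * exp (-ν)) * exp (log 2) := by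
        gcongr (L / (c * log 2)) ^ ν * ?_ * _
        exact rpow_mul_exp_neg_le (by positivity) hν
    _ = 2 * (ν / (c * log 2)) ^ ν * exp (-ν) * L ^ ν := by
        rw [exp_log two_pos, div_rpow hL.le (by positivity), div_rpow hν.le (by positivity)]
        ring

/-- For `p = 0`, any `ν ∈ ℝ`, `τ > 0` and `t > 0`,
`H_{ν,0,τ}(t) = sup_{n≥1} n^ν e^{-2^{τn}t} ≤ C ℓ(t)^{ν₊}` with `C = C(ν,τ)`. -/
theorem stmt10 (τ ν : ℝ) (hτ : 0 < τ) :
    ∃ C > (0:ℝ), ∀ t > (0:ℝ), ∀ n : ℕ, 1 ≤ n →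
      (n : ℝ) ^ ν * Real.exp (-(2:ℝ) ^ (τ * (n:ℝ)) * t)
        ≤ C * tamedLog t ^ (max ν 0) := by
  rcases le_or_gt ν 0 with hν | hν
  · refine ⟨1, one_pos, fun t ht n hn => ?_⟩
    rw [max_eq_right hν, rpow_zero, mul_one]
    have hpow : 0 ≤ (2:ℝ) ^ (τ * n) * t := by positivity
    exact mul_le_one₀ (rpow_le_one_of_one_le_of_nonpos (by exact_mod_cast hn) hν) (by positivity)
      (exp_le_one_iff.mpr (by linarith))
  · refine ⟨2 * (ν / (τ * log 2 * log 2)) ^ ν * exp (-ν), by positivity, fun t ht n _ => ?_⟩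
    rw [max_eq_left hν.le, rpow_def_of_pos two_pos, neg_mul, ← mul_assoc, mul_comm (log 2)]
    exact rpow_mul_exp_neg_exp_mul_le hν (by positivity) ht n.cast_nonneg
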